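/- Let p̂ : {0,1}^5 → ℝ be the joint distribution of (X, Z, Y, S, T) induced by some full SCM. Then the set of values of PNS = P(Y_{X=1} = 1 and Y_{X=0} = 0) attained by full SCMs whose induced joint distribution of (X, Z, Y, S, T) equals p̂ is equal to the set of values of PNS attained by reduced SCMs whose parameter γ equals the p̂-probability of {S = 1} and whose induced joint distribution of (X, Z, Y, S) equals the corresponding marginal of p̂. In particular, the tight lower and upper bounds on PNS computed over the full models coincide with those computed over the reduced models. -/

import Mathlib

open Finset

attribute [local instance] Classical.propDecidable

/-- A reduced SCM as in the paper (with its exogenous types bundled):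
exogenous `U1`, `U2`, a parameter `γ` for the binary pre-treatment variable
`S`, and mechanisms `fX`, `fZ`, `fY`. -/
structure ReducedSCM where
  U1 : Type
  U2 : Type
  [fin1 : Fintype U1]
  [fin2 : Fintype U2]
  p1 : U1 → ℝ
  p2 : U2 → ℝ
  gamma : ℝ
  p1_nonneg : ∀ u, 0 ≤ p1 u
  p2_nonneg : ∀ u, 0 ≤ p2 u
  p1_sum : ∑ u, p1 u = 1
  p2_sum : ∑ u, p2 u = 1
  gamma_nonneg : 0 ≤ gamma
  gamma_le_one : gamma ≤ 1
  fX : U1 → Bool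
  fZ : Bool → Bool → U2 → Bool
  fY : Bool → U1 → Bool

attribute [instance] ReducedSCM.fin1 ReducedSCM.fin2

namespace ReducedSCM

/-- Probability of a unit `(u1, u2, s)`. -/
def w (M : ReducedSCM) (u : M.U1 × M.U2 × Bool) : ℝ :=
  M.p1 u.1 * M.p2 u.2.1 * (if u.2.2 then M.gamma else 1 - M.gamma)

/-- Probability of an event. -/
noncomputable def P (M : ReducedSCM) (E : M.U1 × M.U2 × Bool → Prop) : ℝ :=
  ∑ u, if E u then M.w u else 0

def S (M : ReducedSCM) (u : M.U1 × M.U2 × Bool) : Bool := u.2.2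

def X (M : ReducedSCM) (u : M.U1 × M.U2 × Bool) : Bool := M.fX u.1

def Z (M : ReducedSCM) (u : M.U1 × M.U2 × Bool) : Bool := M.fZ (M.S u) (M.X u) u.2.1

def Y (M : ReducedSCM) (u : M.U1 × M.U2 × Bool) : Bool := M.fY (M.Z u) u.1

/-- Potential outcome `Y_{X=x}`. -/
def Yx (M : ReducedSCM) (x : Bool) (u : M.U1 × M.U2 × Bool) : Bool :=
  M.fY (M.fZ (M.S u) x u.2.1) u.1

/-- Probability of necessity `PN = P(Y_{X=0} = 0, X = 1, Y = 1) / P(X = 1, Y = 1)`. -/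
noncomputable def PN (M : ReducedSCM) : ℝ :=
  M.P (fun u => M.Yx false u = false ∧ M.X u = true ∧ M.Y u = true)
    / M.P (fun u => M.X u = true ∧ M.Y u = true)

/-- Probability of necessity and sufficiency `PNS = P(Y_{X=1} = 1, Y_{X=0} = 0)`. -/
noncomputable def PNS (M : ReducedSCM) : ℝ :=
  M.P (fun u => M.Yx true u = true ∧ M.Yx false u = false)

end ReducedSCM

/-- A full SCM as in the paper (with its exogenous types bundled): exogenous
`U1`, `U2`, `U5`, `U6` and mechanisms `fT`, `fS`, `fX`, `fZ`, `fY`. -/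
structure FullSCM where
  U1 : Type
  U2 : Type
  U5 : Type
  U6 : Type
  [fin1 : Fintype U1]
  [fin2 : Fintype U2]
  [fin5 : Fintype U5]
  [fin6 : Fintype U6]
  p1 : U1 → ℝ
  p2 : U2 → ℝ
  p5 : U5 → ℝ
  p6 : U6 → ℝ
  p1_nonneg : ∀ u, 0 ≤ p1 u
  p2_nonneg : ∀ u, 0 ≤ p2 u
  p5_nonneg : ∀ u, 0 ≤ p5 u
  p6_nonneg : ∀ u, 0 ≤ p6 u
  p1_sum : ∑ u, p1 u = 1
  p2_sum : ∑ u, p2 u = 1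
  p5_sum : ∑ u, p5 u = 1
  p6_sum : ∑ u, p6 u = 1
  fT : U6 → Bool
  fS : Bool → U5 → Bool
  fX : U1 → Bool
  fZ : Bool → Bool → U2 → Bool
  fY : Bool → U1 → Bool

attribute [instance] FullSCM.fin1 FullSCM.fin2 FullSCM.fin5 FullSCM.fin6

namespace FullSCM

/-- Probability of a unit `(u1, u2, u5, u6)`. -/
def w (M : FullSCM) (u : M.U1 × M.U2 × M.U5 × M.U6) : ℝ :=
  M.p1 u.1 * M.p2 u.2.1 * M.p5 u.2.2.1 * M.p6 u.2.2.2

/-- Probability of an event. -/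
noncomputable def P (M : FullSCM) (E : M.U1 × M.U2 × M.U5 × M.U6 → Prop) : ℝ :=
  ∑ u, if E u then M.w u else 0

def T (M : FullSCM) (u : M.U1 × M.U2 × M.U5 × M.U6) : Bool := M.fT u.2.2.2

def S (M : FullSCM) (u : M.U1 × M.U2 × M.U5 × M.U6) : Bool := M.fS (M.T u) u.2.2.1

def X (M : FullSCM) (u : M.U1 × M.U2 × M.U5 × M.U6) : Bool := M.fX u.1

def Z (M : FullSCM) (u : M.U1 × M.U2 × M.U5 × M.U6) : Bool :=
  M.fZ (M.S u) (M.X u) u.2.1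

def Y (M : FullSCM) (u : M.U1 × M.U2 × M.U5 × M.U6) : Bool := M.fY (M.Z u) u.1

/-- Potential outcome `Y_{X=x}`. -/
def Yx (M : FullSCM) (x : Bool) (u : M.U1 × M.U2 × M.U5 × M.U6) : Bool :=
  M.fY (M.fZ (M.S u) x u.2.1) u.1

/-- Probability of necessity `PN = P(Y_{X=0} = 0, X = 1, Y = 1) / P(X = 1, Y = 1)`. -/
noncomputable def PN (M : FullSCM) : ℝ :=
  M.P (fun u => M.Yx false u = false ∧ M.X u = true ∧ M.Y u = true)
    / M.P (fun u => M.X u = true ∧ M.Y u = true)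

/-- Probability of necessity and sufficiency `PNS = P(Y_{X=1} = 1, Y_{X=0} = 0)`. -/
noncomputable def PNS (M : FullSCM) : ℝ :=
  M.P (fun u => M.Yx true u = true ∧ M.Yx false u = false)

end FullSCM

/-- Probability that a distribution `p̂` on `(x, z, y, s, t) ∈ {0,1}^5` assigns
to an event. -/
noncomputable def phatP (phat : Bool × Bool × Bool × Bool × Bool → ℝ)
    (E : Bool × Bool × Bool × Bool × Bool → Prop) : ℝ :=
  ∑ v, if E v then phat v else 0

/-- A full SCM induces `p̂` as the joint distribution of `(X, Z, Y, S, T)`. -/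
def FullSCM.induces (M : FullSCM)
    (phat : Bool × Bool × Bool × Bool × Bool → ℝ) : Prop :=
  ∀ x z y s t : Bool,
    M.P (fun u => M.X u = x ∧ M.Z u = z ∧ M.Y u = y ∧ M.S u = s ∧ M.T u = t)
      = phat (x, z, y, s, t)

/-- A reduced SCM induces the `(X, Z, Y, S)`-marginal of `p̂` as the joint
distribution of `(X, Z, Y, S)`. -/
def ReducedSCM.inducesMarginal (M : ReducedSCM)
    (phat : Bool × Bool × Bool × Bool × Bool → ℝ) : Prop :=
  ∀ x z y s : Bool,
    M.P (fun u => M.X u = x ∧ M.Z u = z ∧ M.Y u = y ∧ M.S u = s)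
      = ∑ t : Bool, phat (x, z, y, s, t)


/-! In both models the weight of a unit factors into a part on `(u1, u2)`, which drives
`X`, `Z`, `Y` and the potential outcomes once `S` is fixed, and an independent part that only
produces `S` (and `T`). Hence the observed law is `P(x, z, y ‖ S = s) · P(S = s, T = t)` and
`PNS = ∑ s, PNS(s) · P(S = s)`, where `P(· ‖ S = s)` and `PNS(s)` depend only on the
`(u1, u2)`-part. A full model is reduced by keeping that part and taking `γ = P(S = 1)`; a reduced
model is extended by attaching the `(S, T)`-mechanism of a full model inducing `p̂`. The marginal
constraint determines `P(x, z, y ‖ S = s)` only where `P(S = s) > 0`, but where `P(S = s) = 0`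
every `P(S = s, T = t)` vanishes too, so the extended model still induces `p̂`. -/

section probOf

variable {Ω : Type*} [Fintype Ω]

noncomputable def probOf (w : Ω → ℝ) (E : Ω → Prop) : ℝ :=
  ∑ u, if E u then w u else 0

theorem probOf_congr (w : Ω → ℝ) {E E' : Ω → Prop} (h : ∀ u, E u ↔ E' u) :
    probOf w E = probOf w E' :=
  Finset.sum_congr rfl fun u _ => if_congr (h u) rfl rfl

theorem probOf_nonneg {w : Ω → ℝ} (hw : ∀ u, 0 ≤ w u) (E : Ω → Prop) : 0 ≤ probOf w E :=
  Finset.sum_nonneg fun u _ => by split_ifs <;> simp [hw u]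

theorem probOf_true (w : Ω → ℝ) : probOf w (fun _ => True) = ∑ u, w u := by
  simp [probOf]

theorem sum_probOf_and_eq {β : Type*} [Fintype β] (w : Ω → ℝ) (E : Ω → Prop) (f : Ω → β) :
    ∑ b, probOf w (fun u => E u ∧ f u = b) = probOf w E := by
  unfold probOf
  rw [Finset.sum_comm]
  refine Finset.sum_congr rfl fun u _ => ?_
  by_cases hE : E u <;> simp [hE]

theorem probOf_comp {β : Type*} [Fintype β] (w : Ω → ℝ) (f : Ω → β) (E : β → Prop) :
    probOf w (fun u => E (f u)) = probOf (fun b => probOf w (fun u => f u = b)) E := by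
  rw [← sum_probOf_and_eq w _ f]
  refine Finset.sum_congr rfl fun b _ => ?_
  by_cases hE : E b
  · rw [if_pos hE]
    exact probOf_congr w fun u => ⟨And.right, fun h => ⟨h ▸ hE, h⟩⟩
  · rw [if_neg hE]
    exact Finset.sum_eq_zero fun u _ => if_neg fun ⟨h, hb⟩ => hE (hb ▸ h)

theorem probOf_equiv {α : Type*} [Fintype α] (e : α ≃ Ω) (w : Ω → ℝ) (E : Ω → Prop) :
    probOf (fun a => w (e a)) (fun a => E (e a)) = probOf w E :=
  e.sum_comp fun u => if E u then w u else 0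

theorem probOf_prod_mul {α β : Type*} [Fintype α] [Fintype β] (w₁ : α → ℝ) (w₂ : β → ℝ)
    (A : α → Prop) (B : β → Prop) :
    probOf (fun v : α × β => w₁ v.1 * w₂ v.2) (fun v => A v.1 ∧ B v.2)
      = probOf w₁ A * probOf w₂ B := by
  simp only [probOf, Fintype.sum_prod_type, Finset.sum_mul_sum, ite_zero_mul_ite_zero]

theorem probOf_prod_snd {α β : Type*} [Fintype α] [Fintype β] {w₁ : α → ℝ} (hw₁ : ∑ a, w₁ a = 1)
    (w₂ : β → ℝ) (B : β → Prop) :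
    probOf (fun v : α × β => w₁ v.1 * w₂ v.2) (fun v => B v.2) = probOf w₂ B := by
  simpa [probOf_true, hw₁] using probOf_prod_mul w₁ w₂ (fun _ => True) B

theorem sum_prod_mul_eq_one {α β : Type*} [Fintype α] [Fintype β] {w₁ : α → ℝ} {w₂ : β → ℝ}
    (hw₁ : ∑ a, w₁ a = 1) (hw₂ : ∑ b, w₂ b = 1) : ∑ v : α × β, w₁ v.1 * w₂ v.2 = 1 := by
  rw [Fintype.sum_prod_type, ← Fintype.sum_mul_sum, hw₁, hw₂, one_mul]

end probOf

theorem mul_eq_mul_of_mul_sum_eq {ι : Type*} [Fintype ι] {a b : ℝ} {q : ι → ℝ}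
    (hq : ∀ i, 0 ≤ q i) (h : a * ∑ i, q i = b * ∑ i, q i) (i : ι) : a * q i = b * q i := by
  by_cases hsum : ∑ i, q i = 0
  · rw [(Finset.sum_eq_zero_iff_of_nonneg fun i _ => hq i).1 hsum i (Finset.mem_univ i),
      mul_zero, mul_zero]
  · rw [mul_right_cancel₀ hsum h]

section Mechanisms

variable {U1 U2 : Type} [Fintype U1] [Fintype U2] (p1 : U1 → ℝ) (p2 : U2 → ℝ)

noncomputable def obsProbGivenS (fX : U1 → Bool) (fZ : Bool → Bool → U2 → Bool)
    (fY : Bool → U1 → Bool) (s x z y : Bool) : ℝ :=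
  probOf (fun v : U1 × U2 => p1 v.1 * p2 v.2) fun v =>
    fX v.1 = x ∧ fZ s x v.2 = z ∧ fY z v.1 = y

noncomputable def pnsGivenS (fZ : Bool → Bool → U2 → Bool) (fY : Bool → U1 → Bool) (s : Bool) :
    ℝ :=
  probOf (fun v : U1 × U2 => p1 v.1 * p2 v.2) fun v =>
    fY (fZ s true v.2) v.1 = true ∧ fY (fZ s false v.2) v.1 = false

end Mechanisms

namespace FullSCM

variable (M : FullSCM)

noncomputable def probS (s : Bool) : ℝ := M.P fun u => M.S u = s

noncomputable def probST (s t : Bool) : ℝ := M.P fun u => M.S u = s ∧ M.T u = t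

theorem w_nonneg (u : M.U1 × M.U2 × M.U5 × M.U6) : 0 ≤ M.w u :=
  mul_nonneg (mul_nonneg (mul_nonneg (M.p1_nonneg _) (M.p2_nonneg _)) (M.p5_nonneg _))
    (M.p6_nonneg _)

theorem P_eq_probOf (E : M.U1 × M.U2 × M.U5 × M.U6 → Prop) : M.P E = probOf M.w E := rfl

theorem P_eq_probOf_prod (E : M.U1 × M.U2 × M.U5 × M.U6 → Prop) :
    M.P E = probOf (fun v : (M.U1 × M.U2) × (M.U5 × M.U6) =>
      (M.p1 v.1.1 * M.p2 v.1.2) * (M.p5 v.2.1 * M.p6 v.2.2)) fun v => E (v.1.1, v.1.2, v.2) := by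
  rw [P_eq_probOf, ← probOf_equiv (Equiv.prodAssoc M.U1 M.U2 (M.U5 × M.U6)) M.w E]
  simp only [w, Equiv.prodAssoc_apply, mul_assoc]

theorem P_snd (B : M.U5 × M.U6 → Prop) :
    M.P (fun u => B u.2.2) = probOf (fun v => M.p5 v.1 * M.p6 v.2) B := by
  rw [P_eq_probOf_prod]
  exact probOf_prod_snd (sum_prod_mul_eq_one M.p1_sum M.p2_sum) (fun v => M.p5 v.1 * M.p6 v.2) B

theorem P_and_indep (A : M.U1 × M.U2 → Prop) (B : M.U5 × M.U6 → Prop) :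
    M.P (fun u => A (u.1, u.2.1) ∧ B u.2.2)
      = probOf (fun v => M.p1 v.1 * M.p2 v.2) A * M.P (fun u => B u.2.2) := by
  rw [P_eq_probOf_prod, P_snd]
  exact probOf_prod_mul (fun v => M.p1 v.1 * M.p2 v.2) (fun v => M.p5 v.1 * M.p6 v.2) A B

theorem probS_nonneg (s : Bool) : 0 ≤ M.probS s :=
  probOf_nonneg M.w_nonneg _

theorem probST_nonneg (s t : Bool) : 0 ≤ M.probST s t :=
  probOf_nonneg M.w_nonneg _

theorem sum_probST (s : Bool) : ∑ t, M.probST s t = M.probS s :=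
  sum_probOf_and_eq M.w _ M.T

theorem sum_probS : ∑ s, M.probS s = 1 := by
  calc ∑ s, M.probS s = M.P fun _ => True := by
        rw [P_eq_probOf, ← sum_probOf_and_eq M.w (fun _ => True) M.S]
        exact Finset.sum_congr rfl fun s _ =>
          probOf_congr M.w fun u => ⟨fun h => ⟨trivial, h⟩, And.right⟩
    _ = 1 := by rw [M.P_snd fun _ => True, probOf_true, sum_prod_mul_eq_one M.p5_sum M.p6_sum]

theorem probS_false : M.probS false = 1 - M.probS true := by
  linarith [Fintype.sum_bool M.probS ▸ M.sum_probS]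

theorem P_obs (x z y s t : Bool) :
    M.P (fun u => M.X u = x ∧ M.Z u = z ∧ M.Y u = y ∧ M.S u = s ∧ M.T u = t)
      = obsProbGivenS M.p1 M.p2 M.fX M.fZ M.fY s x z y * M.probST s t := by
  refine (probOf_congr M.w fun u => ?_).trans
    (M.P_and_indep _ fun v => M.fS (M.fT v.2) v.1 = s ∧ M.fT v.2 = t)
  simp only [X, Z, Y, S, T]
  grind

theorem PNS_eq : M.PNS = ∑ s, pnsGivenS M.p1 M.p2 M.fZ M.fY s * M.probS s := by
  rw [PNS, P_eq_probOf, ← sum_probOf_and_eq M.w _ M.S]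
  refine Finset.sum_congr rfl fun s _ => (probOf_congr M.w fun u => ?_).trans
    (M.P_and_indep _ fun v => M.fS (M.fT v.2) v.1 = s)
  exact and_congr_left fun hs => by rw [Yx, Yx, hs]

theorem induces_phatP {phat : Bool × Bool × Bool × Bool × Bool → ℝ} (hM : M.induces phat)
    (E : Bool × Bool × Bool × Bool × Bool → Prop) :
    phatP phat E = M.P fun u => E (M.X u, M.Z u, M.Y u, M.S u, M.T u) := by
  have hphat : phat = fun v => M.P fun u => (M.X u, M.Z u, M.Y u, M.S u, M.T u) = v := by
    funext ⟨x, z, y, s, t⟩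
    exact (hM x z y s t).symm.trans (probOf_congr M.w fun u => by simp only [Prod.mk.injEq])
  rw [hphat]
  exact (probOf_comp M.w _ E).symm

end FullSCM

namespace ReducedSCM

variable (M : ReducedSCM)

noncomputable def probS (s : Bool) : ℝ := M.P fun u => M.S u = s

theorem P_eq_probOf (E : M.U1 × M.U2 × Bool → Prop) : M.P E = probOf M.w E := rfl

theorem P_eq_probOf_prod (E : M.U1 × M.U2 × Bool → Prop) :
    M.P E = probOf (fun v : (M.U1 × M.U2) × Bool =>
      (M.p1 v.1.1 * M.p2 v.1.2) * (if v.2 then M.gamma else 1 - M.gamma))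
      fun v => E (v.1.1, v.1.2, v.2) := by
  rw [P_eq_probOf, ← probOf_equiv (Equiv.prodAssoc M.U1 M.U2 Bool) M.w E]
  rfl

theorem probS_eq (s : Bool) : M.probS s = if s then M.gamma else 1 - M.gamma := by
  rw [probS, P_eq_probOf_prod]
  refine (probOf_prod_snd (sum_prod_mul_eq_one M.p1_sum M.p2_sum)
    (fun b => if b then M.gamma else 1 - M.gamma) (· = s)).trans ?_
  cases s <;> simp [probOf]

theorem probS_eq_of_gamma_eq {N : FullSCM} (h : M.gamma = N.probS true) (s : Bool) :
    M.probS s = N.probS s := by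
  cases s <;> simp [probS_eq, h, N.probS_false]

theorem P_and_S (A : M.U1 × M.U2 → Prop) (s : Bool) :
    M.P (fun u => A (u.1, u.2.1) ∧ M.S u = s)
      = probOf (fun v => M.p1 v.1 * M.p2 v.2) A * M.probS s := by
  rw [probS, P_eq_probOf_prod, P_eq_probOf_prod]
  have hlaw := probOf_prod_snd (sum_prod_mul_eq_one M.p1_sum M.p2_sum)
    (fun b => if b then M.gamma else 1 - M.gamma) (· = s)
  exact (probOf_prod_mul (fun v => M.p1 v.1 * M.p2 v.2) _ A (· = s)).trans
    (congrArg (probOf _ A * ·) hlaw.symm)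

theorem P_obs (x z y s : Bool) :
    M.P (fun u => M.X u = x ∧ M.Z u = z ∧ M.Y u = y ∧ M.S u = s)
      = obsProbGivenS M.p1 M.p2 M.fX M.fZ M.fY s x z y * M.probS s := by
  refine (probOf_congr M.w fun u => ?_).trans (M.P_and_S _ s)
  simp only [X, Z, Y, S]
  grind

theorem PNS_eq : M.PNS = ∑ s, pnsGivenS M.p1 M.p2 M.fZ M.fY s * M.probS s := by
  rw [PNS, P_eq_probOf, ← sum_probOf_and_eq M.w _ M.S]
  refine Finset.sum_congr rfl fun s _ => (probOf_congr M.w fun u => ?_).trans (M.P_and_S _ s)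
  exact and_congr_left fun hs => by rw [Yx, Yx, hs]

def toFull (N : FullSCM) : FullSCM where
  U1 := M.U1
  U2 := M.U2
  U5 := N.U5
  U6 := N.U6
  p1 := M.p1
  p2 := M.p2
  p5 := N.p5
  p6 := N.p6
  p1_nonneg := M.p1_nonneg
  p2_nonneg := M.p2_nonneg
  p5_nonneg := N.p5_nonneg
  p6_nonneg := N.p6_nonneg
  p1_sum := M.p1_sum
  p2_sum := M.p2_sum
  p5_sum := N.p5_sum
  p6_sum := N.p6_sum
  fT := N.fT
  fS := N.fS
  fX := M.fX
  fZ := M.fZ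
  fY := M.fY

variable {M}

theorem toFull_probST (N : FullSCM) (s t : Bool) : (M.toFull N).probST s t = N.probST s t :=
  ((M.toFull N).P_snd fun v => N.fS (N.fT v.2) v.1 = s ∧ N.fT v.2 = t).trans (N.P_snd _).symm

theorem toFull_probS (N : FullSCM) (s : Bool) : (M.toFull N).probS s = N.probS s := by
  simp only [← FullSCM.sum_probST, toFull_probST]

theorem toFull_induces {N : FullSCM} {phat : Bool × Bool × Bool × Bool × Bool → ℝ}
    (hN : N.induces phat) (hS : ∀ s, M.probS s = N.probS s) (hM : M.inducesMarginal phat) :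
    (M.toFull N).induces phat := by
  intro x z y s t
  have hmarg : obsProbGivenS M.p1 M.p2 M.fX M.fZ M.fY s x z y * ∑ t, N.probST s t
      = obsProbGivenS N.p1 N.p2 N.fX N.fZ N.fY s x z y * ∑ t, N.probST s t := by
    calc _ = M.P (fun u => M.X u = x ∧ M.Z u = z ∧ M.Y u = y ∧ M.S u = s) := by
          rw [N.sum_probST, ← hS, M.P_obs]
      _ = ∑ t, phat (x, z, y, s, t) := hM x z y s
      _ = _ := by
          rw [Finset.mul_sum]
          exact Finset.sum_congr rfl fun t _ => (hN x z y s t).symm.trans (N.P_obs x z y s t)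
  rw [FullSCM.P_obs, toFull_probST, ← hN, N.P_obs]
  exact mul_eq_mul_of_mul_sum_eq (N.probST_nonneg s) hmarg t

theorem PNS_toFull {N : FullSCM} (hS : ∀ s, M.probS s = N.probS s) :
    (M.toFull N).PNS = M.PNS := by
  rw [FullSCM.PNS_eq, M.PNS_eq]
  simp only [toFull_probS, hS]
  rfl

end ReducedSCM

namespace FullSCM

variable (M : FullSCM)

noncomputable def toReduced : ReducedSCM where
  U1 := M.U1
  U2 := M.U2
  p1 := M.p1
  p2 := M.p2
  gamma := M.probS true
  p1_nonneg := M.p1_nonneg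
  p2_nonneg := M.p2_nonneg
  p1_sum := M.p1_sum
  p2_sum := M.p2_sum
  gamma_nonneg := M.probS_nonneg true
  gamma_le_one := by linarith [M.probS_false, M.probS_nonneg false]
  fX := M.fX
  fZ := M.fZ
  fY := M.fY

variable {M}

theorem toReduced_probS (s : Bool) : M.toReduced.probS s = M.probS s :=
  M.toReduced.probS_eq_of_gamma_eq rfl s

theorem toReduced_inducesMarginal {phat : Bool × Bool × Bool × Bool × Bool → ℝ}
    (hM : M.induces phat) : M.toReduced.inducesMarginal phat := by
  intro x z y s
  rw [ReducedSCM.P_obs, toReduced_probS, ← M.sum_probST, Finset.mul_sum]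
  exact Finset.sum_congr rfl fun t _ => (M.P_obs x z y s t).symm.trans (hM x z y s t)

theorem PNS_toReduced : M.toReduced.PNS = M.PNS := by
  rw [ReducedSCM.PNS_eq, M.PNS_eq]
  simp only [toReduced_probS]
  rfl

end FullSCM

/-- If `p̂` is the joint distribution of `(X, Z, Y, S, T)` of some
full SCM, then the set of PNS values attained by full SCMs inducing `p̂` equals
the set of PNS values attained by reduced SCMs whose `γ` is `p̂(S = 1)` and
whose `(X, Z, Y, S)`-distribution is the marginal of `p̂`. -/
theorem PNS_values_full_eq_reduced
    (phat : Bool × Bool × Bool × Bool × Bool → ℝ)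
    (hind : ∃ M0 : FullSCM, M0.induces phat) :
    {r : ℝ | ∃ M : FullSCM, M.induces phat ∧ M.PNS = r}
      = {r : ℝ | ∃ M' : ReducedSCM,
          M'.gamma = phatP phat (fun v => v.2.2.2.1 = true) ∧
          M'.inducesMarginal phat ∧ M'.PNS = r} := by
  ext r
  constructor
  · rintro ⟨M, hM, rfl⟩
    exact ⟨M.toReduced, (M.induces_phatP hM fun v => v.2.2.2.1 = true).symm,
      FullSCM.toReduced_inducesMarginal hM, FullSCM.PNS_toReduced⟩
  · rintro ⟨M', hγ, hM', rfl⟩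
    obtain ⟨M0, hM0⟩ := hind
    have hS := M'.probS_eq_of_gamma_eq (hγ.trans (M0.induces_phatP hM0 _))
    exact ⟨M'.toFull M0, ReducedSCM.toFull_induces hM0 hS hM', ReducedSCM.PNS_toFull hS⟩
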